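/- Let d ∈ {2,3}, s > 1, m ≥ 0, Ω ∈ ℝ, and γ_r > 0. Then there exists a constant C ≥ 0, depending only on Ω, γ_r, s, m and d, such that for every Schwartz function φ on ℝ^d with ‖φ‖_{L²} = 1: |Ω ∫_{ℝ^d} φ̄(x) L_z φ(x) dx| ≤ (γ_r²/2) ∫_{ℝ^d} |x|² |φ(x)|² dx + (1/4)(2π)^{-d} ∫_{ℝ^d} (|k|²+m²)^s |φ̂(k)|² dk + C. -/

import Mathlib

open MeasureTheory Real

noncomputable section

namespace Statement19

variable (d : ℕ)

/-- Fourier transform with the convention `φ̂(k) = ∫ φ(x) e^{-i k·x} dx`. -/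
def ft (φ : EuclideanSpace ℝ (Fin d) → ℂ) (k : EuclideanSpace ℝ (Fin d)) : ℂ :=
  ∫ x, φ x * Complex.exp (-(Complex.I * ((inner ℝ x k : ℝ) : ℂ)))

/-- The angular momentum operator `L_z = -i (x ∂_y - y ∂_x)`. -/
def Lz (h : 2 ≤ d) (φ : EuclideanSpace ℝ (Fin d) → ℂ) (x : EuclideanSpace ℝ (Fin d)) : ℂ :=
  -Complex.I * (((x ⟨0, by omega⟩ : ℝ) : ℂ) *
      fderiv ℝ φ x (EuclideanSpace.single ⟨1, by omega⟩ 1)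
    - ((x ⟨1, by omega⟩ : ℝ) : ℂ) *
      fderiv ℝ φ x (EuclideanSpace.single ⟨0, by omega⟩ 1))

/-!
Pointwise, `|Ω| |φ| |L_z φ| ≤ |Ω| |φ| (|x| |∂_y φ| + |y| |∂_x φ|)`, and the weighted AM–GM
inequality splits this into `(γ²/2) (x² + y²) |φ|²` plus `(Ω²/2γ²) (|∂_x φ|² + |∂_y φ|²)`.
By Plancherel the second part integrates to at most `(Ω²/2γ²) ∫ (2π)² |ξ|² |𝓕 φ|²`. Since `s > 1`,
the linear function `t ↦ (Ω²/2γ²) t` is dominated by `t^s / 4 + C` on `t ≥ 0`; taking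
`t = (2π)² |ξ|² + m²` and integrating against `|𝓕 φ|²`, whose total mass is `‖φ‖² = 1`, gives the
claim once the substitution `k = 2π ξ` converts Mathlib's Fourier transform `𝓕` into `φ̂`.
-/

end Statement19

open SchwartzMap LineDeriv
open scoped FourierTransform

theorem exists_mul_le_mul_rpow_add {A ε s : ℝ} (hA : 0 ≤ A) (hε : 0 < ε) (hs : 1 < s) :
    ∃ C, 0 ≤ C ∧ ∀ t, 0 ≤ t → A * t ≤ ε * t ^ s + C := by
  -- below `T` the constant `A * T` suffices; beyond it `ε * t ^ (s - 1) ≥ A`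
  set T := max 1 ((A / ε) ^ (s - 1)⁻¹)
  refine ⟨A * T, by positivity, fun t ht => ?_⟩
  rcases le_or_gt t T with htT | hTt
  · have := mul_le_mul_of_nonneg_left htT hA
    nlinarith [Real.rpow_nonneg ht s]
  · have ht0 : 0 < t := lt_of_lt_of_le one_pos ((le_max_left _ _).trans hTt.le)
    have hA_le : A / ε ≤ t ^ (s - 1) := by
      calc A / ε = ((A / ε) ^ (s - 1)⁻¹) ^ (s - 1) := by
            rw [← Real.rpow_mul (by positivity), inv_mul_cancel₀ (by linarith), Real.rpow_one]
        _ ≤ t ^ (s - 1) := by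
            gcongr
            exact (le_max_right _ _).trans hTt.le
    have hts : t ^ s = t * t ^ (s - 1) := by
      rw [← Real.rpow_one_add' ht0.le (by linarith)]; ring_nf
    rw [div_le_iff₀ hε] at hA_le
    rw [hts]
    nlinarith [mul_le_mul_of_nonneg_left hA_le ht0.le, mul_nonneg hA (by positivity : 0 ≤ T)]

theorem mul_mul_le_sq_add_sq (c a b : ℝ) {γ : ℝ} (hγ : 0 < γ) :
    c * (a * b) ≤ γ ^ 2 / 2 * a ^ 2 + c ^ 2 / (2 * γ ^ 2) * b ^ 2 := by
  have hsq : γ ^ 2 / 2 * a ^ 2 + c ^ 2 / (2 * γ ^ 2) * b ^ 2 - c * (a * b)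
      = (γ * a - c * b / γ) ^ 2 / 2 := by
    field_simp
    ring
  linarith [sq_nonneg (γ * a - c * b / γ)]

theorem rpow_mul_sq_add_le {a b s r : ℝ} (ha : 0 ≤ a) (hb : 0 ≤ b) (hs : 0 ≤ s)
    (hr : 0 ≤ r) :
    (a * r ^ 2 + b) ^ s ≤ (1 + a + b) ^ ⌈s⌉₊ * (1 + r) ^ (2 * ⌈s⌉₊) := by
  have hT : a * r ^ 2 + b ≤ (1 + a + b) * (1 + r) ^ 2 := by nlinarith [mul_nonneg ha hr]
  have hT1 : 1 ≤ (1 + a + b) * (1 + r) ^ 2 := by nlinarith [mul_nonneg ha hr]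
  calc (a * r ^ 2 + b) ^ s ≤ ((1 + a + b) * (1 + r) ^ 2) ^ s := by gcongr
    _ ≤ ((1 + a + b) * (1 + r) ^ 2) ^ (⌈s⌉₊ : ℝ) :=
        Real.rpow_le_rpow_of_exponent_le hT1 (Nat.le_ceil s)
    _ = (1 + a + b) ^ ⌈s⌉₊ * (1 + r) ^ (2 * ⌈s⌉₊) := by
        rw [Real.rpow_natCast, mul_pow, pow_mul]

namespace SchwartzMap

variable {V : Type*} [NormedAddCommGroup V] [InnerProductSpace ℝ V] [FiniteDimensional ℝ V]
  [MeasurableSpace V] [BorelSpace V]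

variable {F : Type*} [NormedAddCommGroup F] [NormedSpace ℝ F]

theorem integrable_norm_sq (f : 𝓢(V, F)) :
    Integrable (fun x => ‖f x‖ ^ 2) :=
  (f.memLp 2).integrable_norm_pow two_ne_zero

theorem integrable_mul_norm_sq_of_le (f : 𝓢(V, F)) {w : V → ℝ} (hw : AEStronglyMeasurable w)
    {C : ℝ} {k : ℕ} (hwC : ∀ x, |w x| ≤ C * (1 + ‖x‖) ^ k) :
    Integrable (fun x => w x * ‖f x‖ ^ 2) := by
  set M := 2 ^ k * (Finset.Iic (k, 0)).sup (fun m => SchwartzMap.seminorm ℝ m.1 m.2) f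
  have hdecay : ∀ x, (1 + ‖x‖) ^ k * ‖f x‖ ≤ M := fun x => by
    simpa using f.one_add_le_sup_seminorm_apply (𝕜 := ℝ) (m := (k, 0)) le_rfl le_rfl x
  have hC : 0 ≤ C := by simpa using (abs_nonneg _).trans (hwC 0)
  have hbound : ∀ x, ‖w x * ‖f x‖‖ ≤ C * M := fun x => by
    rw [norm_mul, norm_norm, Real.norm_eq_abs]
    calc |w x| * ‖f x‖ ≤ C * (1 + ‖x‖) ^ k * ‖f x‖ := by gcongr; exact hwC x
      _ ≤ C * M := by rw [mul_assoc]; gcongr; exact hdecay x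
  have := f.integrable.norm.bdd_mul (hw.mul f.continuous.norm.aestronglyMeasurable)
    (Filter.Eventually.of_forall hbound)
  simpa [sq, mul_assoc] using this

theorem integrable_rpow_mul_norm_sq (f : 𝓢(V, F)) {a b s : ℝ} (ha : 0 ≤ a) (hb : 0 ≤ b)
    (hs : 0 ≤ s) :
    Integrable (fun x => (a * ‖x‖ ^ 2 + b) ^ s * ‖f x‖ ^ 2) :=
  f.integrable_mul_norm_sq_of_le (by fun_prop) fun x => by
    rw [abs_of_nonneg (by positivity)]
    exact rpow_mul_sq_add_le ha hb hs (norm_nonneg x)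

theorem integrable_norm_sq_mul_norm_sq (f : 𝓢(V, F)) : Integrable (fun x => ‖x‖ ^ 2 * ‖f x‖ ^ 2) :=
  f.integrable_mul_norm_sq_of_le (C := 1) (k := 2) (by fun_prop) fun x => by
    rw [abs_of_nonneg (by positivity), one_mul]
    gcongr
    linarith [norm_nonneg x]

theorem mul_integral_norm_sq_mul_norm_sq_le (f : 𝓢(V, F)) {A ε s C a b : ℝ} (hA : 0 ≤ A)
    (ha : 0 ≤ a) (hb : 0 ≤ b) (hs : 0 ≤ s) (hC : ∀ t, 0 ≤ t → A * t ≤ ε * t ^ s + C) :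
    A * (a * ∫ x, ‖x‖ ^ 2 * ‖f x‖ ^ 2)
      ≤ ε * (∫ x, (a * ‖x‖ ^ 2 + b) ^ s * ‖f x‖ ^ 2) + C * ∫ x, ‖f x‖ ^ 2 := by
  have hW := f.integrable_rpow_mul_norm_sq ha hb hs
  calc A * (a * ∫ x, ‖x‖ ^ 2 * ‖f x‖ ^ 2)
        = ∫ x, A * (a * (‖x‖ ^ 2 * ‖f x‖ ^ 2)) := by
        rw [integral_const_mul, integral_const_mul]
    _ ≤ ∫ x, (ε * ((a * ‖x‖ ^ 2 + b) ^ s * ‖f x‖ ^ 2) + C * ‖f x‖ ^ 2) := by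
        refine integral_mono ((f.integrable_norm_sq_mul_norm_sq.const_mul _).const_mul _)
          ((hW.const_mul _).add (f.integrable_norm_sq.const_mul _)) fun x => ?_
        have ht : 0 ≤ a * ‖x‖ ^ 2 + b := by positivity
        calc A * (a * (‖x‖ ^ 2 * ‖f x‖ ^ 2))
            ≤ A * (a * ‖x‖ ^ 2 + b) * ‖f x‖ ^ 2 := by
              rw [← mul_assoc a, ← mul_assoc]; gcongr; linarith
          _ ≤ (ε * (a * ‖x‖ ^ 2 + b) ^ s + C) * ‖f x‖ ^ 2 := by gcongr; exact hC _ ht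
          _ = _ := by ring
    _ = _ := by
        rw [integral_add (hW.const_mul _) (f.integrable_norm_sq.const_mul _), integral_const_mul,
          integral_const_mul]

variable {H : Type*} [NormedAddCommGroup H] [InnerProductSpace ℂ H]

theorem norm_fourier_lineDerivOp_apply (f : 𝓢(V, H)) (v ξ : V) :
    ‖𝓕 (∂_{v} f) ξ‖ = 2 * π * |inner ℝ ξ v| * ‖𝓕 f ξ‖ := by
  have : (inner ℝ · v).HasTemperateGrowth := ((innerSL ℝ).flip v).hasTemperateGrowth
  simp [fourier_lineDerivOp_eq, this, norm_smul, abs_of_pos Real.pi_pos, mul_assoc]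

variable [CompleteSpace H]

theorem sum_integral_norm_sq_lineDerivOp_le {ι : Type*} [Fintype ι] {u : ι → V}
    (hu : Orthonormal ℝ u) (f : 𝓢(V, H)) :
    ∑ i, ∫ x, ‖∂_{u i} f x‖ ^ 2
      ≤ (2 * π) ^ 2 * ∫ ξ, ‖ξ‖ ^ 2 * ‖𝓕 f ξ‖ ^ 2 := by
  rw [← integral_const_mul]
  calc ∑ i, ∫ x, ‖∂_{u i} f x‖ ^ 2 = ∫ ξ, ∑ i, ‖𝓕 (∂_{u i} f) ξ‖ ^ 2 := by
        rw [integral_finsetSum _ fun i _ => integrable_norm_sq _]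
        simp_rw [integral_norm_sq_fourier]
    _ ≤ ∫ ξ, (2 * π) ^ 2 * (‖ξ‖ ^ 2 * ‖𝓕 f ξ‖ ^ 2) := by
        refine integral_mono (integrable_finsetSum _ fun i _ => integrable_norm_sq _)
          ((𝓕 f).integrable_norm_sq_mul_norm_sq.const_mul _) fun ξ => ?_
        have hbessel := hu.sum_inner_products_le ξ (s := Finset.univ)
        simp only [norm_fourier_lineDerivOp_apply, mul_pow, sq_abs, ← Finset.sum_mul,
          ← Finset.mul_sum]
        simp only [Real.norm_eq_abs, sq_abs, real_inner_comm] at hbessel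
        rw [← mul_assoc]
        gcongr

end SchwartzMap

namespace Statement19

variable (d : ℕ)

abbrev rotationPlaneBasis (h : 2 ≤ d) (k : Fin 2) : EuclideanSpace ℝ (Fin d) :=
  EuclideanSpace.single (Fin.castLE h k) 1

theorem orthonormal_rotationPlaneBasis (h : 2 ≤ d) : Orthonormal ℝ (rotationPlaneBasis d h) :=
  EuclideanSpace.orthonormal_single.comp _ (Fin.castLE_injective h)

theorem abs_mul_norm_conj_mul_Lz_le (h : 2 ≤ d) (φ : EuclideanSpace ℝ (Fin d) → ℂ) (Ω : ℝ)
    {γ : ℝ} (hγ : 0 < γ) (x : EuclideanSpace ℝ (Fin d)) :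
    |Ω| * ‖(starRingEnd ℂ) (φ x) * Lz d h φ x‖
      ≤ γ ^ 2 / 2 * (‖x‖ ^ 2 * ‖φ x‖ ^ 2)
        + Ω ^ 2 / (2 * γ ^ 2) * ∑ k, ‖fderiv ℝ φ x (rotationPlaneBasis d h k)‖ ^ 2 := by
  set x₀ := x (Fin.castLE h 0)
  set x₁ := x (Fin.castLE h 1)
  set D := fun k => ‖fderiv ℝ φ x (rotationPlaneBasis d h k)‖
  have hLz : ‖Lz d h φ x‖ ≤ |x₀| * D 1 + |x₁| * D 0 := by
    rw [Lz, norm_mul, norm_neg, Complex.norm_I, one_mul]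
    refine (norm_sub_le _ _).trans_eq ?_
    simp only [norm_mul, Complex.norm_real, Real.norm_eq_abs]
    rfl
  have hx : x₀ ^ 2 + x₁ ^ 2 ≤ ‖x‖ ^ 2 := by
    have := (orthonormal_rotationPlaneBasis d h).sum_inner_products_le x (s := Finset.univ)
    simpa [Fin.sum_univ_two, EuclideanSpace.inner_single_left] using this
  have h₀ := mul_mul_le_sq_add_sq |Ω| (|x₀| * ‖φ x‖) (D 1) hγ
  have h₁ := mul_mul_le_sq_add_sq |Ω| (|x₁| * ‖φ x‖) (D 0) hγ
  rw [Fin.sum_univ_two, norm_mul, RCLike.norm_conj]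
  calc |Ω| * (‖φ x‖ * ‖Lz d h φ x‖) ≤ |Ω| * (‖φ x‖ * (|x₀| * D 1 + |x₁| * D 0)) := by gcongr
    _ = |Ω| * ((|x₀| * ‖φ x‖) * D 1) + |Ω| * ((|x₁| * ‖φ x‖) * D 0) := by ring
    _ ≤ γ ^ 2 / 2 * ((x₀ ^ 2 + x₁ ^ 2) * ‖φ x‖ ^ 2)
          + Ω ^ 2 / (2 * γ ^ 2) * (D 0 ^ 2 + D 1 ^ 2) := by
        simp only [mul_pow, sq_abs] at h₀ h₁
        linarith
    _ ≤ _ := by gcongr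

theorem norm_ofReal_mul_integral_conj_mul_Lz_le (h : 2 ≤ d)
    (φ : 𝓢(EuclideanSpace ℝ (Fin d), ℂ)) (Ω : ℝ) {γ : ℝ} (hγ : 0 < γ) :
    ‖(Ω : ℂ) * ∫ x, (starRingEnd ℂ) (φ x) * Lz d h φ x‖
      ≤ γ ^ 2 / 2 * (∫ x, ‖x‖ ^ 2 * ‖φ x‖ ^ 2)
        + Ω ^ 2 / (2 * γ ^ 2) * ∑ k, ∫ x, ‖∂_{rotationPlaneBasis d h k} φ x‖ ^ 2 := by
  have hD : Integrable fun x => ∑ k, ‖∂_{rotationPlaneBasis d h k} φ x‖ ^ 2 :=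
    integrable_finsetSum _ fun k _ => integrable_norm_sq _
  rw [norm_mul, Complex.norm_real, Real.norm_eq_abs]
  calc |Ω| * ‖∫ x, (starRingEnd ℂ) (φ x) * Lz d h φ x‖
      ≤ ∫ x, |Ω| * ‖(starRingEnd ℂ) (φ x) * Lz d h φ x‖ := by
        rw [integral_const_mul]; gcongr; exact norm_integral_le_integral_norm _
    _ ≤ ∫ x, (γ ^ 2 / 2 * (‖x‖ ^ 2 * ‖φ x‖ ^ 2)
          + Ω ^ 2 / (2 * γ ^ 2) * ∑ k, ‖∂_{rotationPlaneBasis d h k} φ x‖ ^ 2) := by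
        refine integral_mono_of_nonneg (.of_forall fun x => by positivity)
          ((φ.integrable_norm_sq_mul_norm_sq.const_mul _).add (hD.const_mul _)) (.of_forall ?_)
        simpa only [lineDerivOp_apply_eq_fderiv] using abs_mul_norm_conj_mul_Lz_le d h φ Ω hγ
    _ = _ := by
        rw [integral_add (φ.integrable_norm_sq_mul_norm_sq.const_mul _) (hD.const_mul _),
          integral_const_mul, integral_const_mul,
          integral_finsetSum _ fun k _ => integrable_norm_sq _]

theorem ft_eq_fourier (φ : EuclideanSpace ℝ (Fin d) → ℂ) (k : EuclideanSpace ℝ (Fin d)) :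
    ft d φ k = 𝓕 φ ((2 * π)⁻¹ • k) := by
  rw [Real.fourier_eq', ft]
  congr 1 with x
  rw [smul_eq_mul, real_inner_smul_right, mul_comm]
  congr 2
  push_cast
  field_simp

theorem integral_mul_norm_sq_ft (w : EuclideanSpace ℝ (Fin d) → ℝ)
    (φ : EuclideanSpace ℝ (Fin d) → ℂ) :
    ∫ k, w k * ‖ft d φ k‖ ^ 2 = (2 * π) ^ d * ∫ ξ, w ((2 * π) • ξ) * ‖𝓕 φ ξ‖ ^ 2 := by
  have h := Measure.integral_comp_inv_smul_of_nonneg volume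
    (fun ξ => w ((2 * π) • ξ) * ‖𝓕 φ ξ‖ ^ 2) (by positivity : (0 : ℝ) ≤ 2 * π)
  rw [finrank_euclideanSpace_fin, smul_eq_mul] at h
  rw [← h]
  congr 1 with k
  rw [ft_eq_fourier, smul_inv_smul₀ (by positivity)]

theorem statement19 (h2 : 2 ≤ d) (s m Ω γr : ℝ)
    (hs : 1 < s) (hγ : 0 < γr) :
    ∃ C : ℝ, 0 ≤ C ∧ ∀ φ : SchwartzMap (EuclideanSpace ℝ (Fin d)) ℂ,
      (∫ x, ‖φ x‖ ^ 2) = 1 →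
      ‖((Ω : ℝ) : ℂ) * ∫ x, (starRingEnd ℂ) (φ x) * Lz d h2 (fun y => φ y) x‖
        ≤ γr ^ 2 / 2 * (∫ x, ‖x‖ ^ 2 * ‖φ x‖ ^ 2)
          + (1 / 4) * ((2 * π) ^ d)⁻¹ *
              (∫ k, (‖k‖ ^ 2 + m ^ 2) ^ s * ‖ft d (fun y => φ y) k‖ ^ 2)
          + C := by
  have hA : 0 ≤ Ω ^ 2 / (2 * γr ^ 2) := by positivity
  obtain ⟨C, hC0, hC⟩ := exists_mul_le_mul_rpow_add hA (by norm_num : (0 : ℝ) < 1 / 4) hs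
  refine ⟨C, hC0, fun φ hφ => ?_⟩
  have hposition := norm_ofReal_mul_integral_conj_mul_Lz_le d h2 φ Ω hγ
  have hkinetic := sum_integral_norm_sq_lineDerivOp_le (orthonormal_rotationPlaneBasis d h2) φ
  have hyoung := (𝓕 φ).mul_integral_norm_sq_mul_norm_sq_le hA (sq_nonneg (2 * π))
    (sq_nonneg m) (by linarith) hC
  rw [integral_norm_sq_fourier, hφ, mul_one] at hyoung
  have hft : ((2 * π) ^ d)⁻¹ * ∫ k, (‖k‖ ^ 2 + m ^ 2) ^ s * ‖ft d φ k‖ ^ 2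
      = ∫ ξ, ((2 * π) ^ 2 * ‖ξ‖ ^ 2 + m ^ 2) ^ s * ‖𝓕 φ ξ‖ ^ 2 := by
    rw [integral_mul_norm_sq_ft, inv_mul_cancel_left₀ (by positivity)]
    simp [norm_smul, mul_pow, abs_of_pos pi_pos, fourier_coe]
  linarith [mul_le_mul_of_nonneg_left hkinetic hA]

end Statement19
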